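/- For the parent-time function ρ(t) = t - 2^{δ(t)} with δ(t) the 2-adic valuation of t, define cut(t) = {s ∈ {1,...,T} : ρ(s) < t ≤ s}. Then for every t ∈ {1,...,T}, |cut(t)| ≤ log₂(T) + 1. -/

import Mathlib

/-- The parent-time function ρ(t) = t - 2^(δ(t)), where δ(t) is the 2-adic valuation. -/
def parentTime (t : ℕ) : ℕ := t - 2 ^ (padicValNat 2 t)

/-- cut(t) = {s ∈ {1,...,T} : ρ(s) < t ≤ s}. -/
def cut (T t : ℕ) : Finset ℕ :=
  (Finset.Icc 1 T).filter (fun s => parentTime s < t ∧ t ≤ s)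

/-!
The elements of `cut T t` all lie in the window `[t, t + 2^v)` where `v` is their own 2-adic
valuation. Such a window contains only one multiple of `2^v`, so an element of the cut is
determined by its valuation. Each valuation is at most `log₂ T`, leaving at most `⌊log₂ T⌋ + 1`
elements.
-/

theorem Nat.eq_of_dvd_of_lt_add {m a b : ℕ} (ha : m ∣ a) (hb : m ∣ b) (hab : a < b + m)
    (hba : b < a + m) : a = b := by
  have h : a ≡ b [MOD m] := (Nat.modEq_zero_iff_dvd.2 ha).trans (Nat.modEq_zero_iff_dvd.2 hb).symm
  exact le_antisymm (h.le_of_lt_add hab) (h.symm.le_of_lt_add hba)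

theorem lt_add_pow_padicValNat_of_parentTime_lt {s t : ℕ} (h : parentTime s < t) :
    s < t + 2 ^ padicValNat 2 s := by
  unfold parentTime at h
  omega

theorem injOn_padicValNat_cut (T t : ℕ) : Set.InjOn (padicValNat 2) (cut T t : Set ℕ) := by
  intro s₁ hs₁ s₂ hs₂ hv
  obtain ⟨-, hρ₁, hle₁⟩ := Finset.mem_filter.1 hs₁
  obtain ⟨-, hρ₂, hle₂⟩ := Finset.mem_filter.1 hs₂
  have hlt₁ := lt_add_pow_padicValNat_of_parentTime_lt hρ₁
  have hlt₂ := lt_add_pow_padicValNat_of_parentTime_lt hρ₂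
  have hdvd₂ : 2 ^ padicValNat 2 s₁ ∣ s₂ := hv ▸ pow_padicValNat_dvd
  rw [← hv] at hlt₂
  exact Nat.eq_of_dvd_of_lt_add pow_padicValNat_dvd hdvd₂ (by omega) (by omega)

theorem padicValNat_le_log_of_mem_cut {T t s : ℕ} (hs : s ∈ cut T t) :
    padicValNat 2 s ≤ Nat.log 2 T :=
  (padicValNat_le_nat_log s).trans
    (Nat.log_mono_right (Finset.mem_Icc.1 (Finset.mem_filter.1 hs).1).2)

theorem card_cut_le_log (T t : ℕ) : (cut T t).card ≤ Nat.log 2 T + 1 := by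
  simpa using Finset.card_le_card_of_injOn (padicValNat 2)
    (fun s hs => Finset.mem_range_succ_iff.2 (padicValNat_le_log_of_mem_cut hs))
    (injOn_padicValNat_cut T t)

theorem cut_card_le_general (T : ℕ) (t : ℕ) :
    ((cut T t).card : ℝ) ≤ Real.logb 2 T + 1 := by
  calc ((cut T t).card : ℝ) ≤ (Nat.log 2 T : ℝ) + 1 := by exact_mod_cast card_cut_le_log T t
    _ ≤ Real.logb 2 T + 1 := by gcongr; exact Real.natLog_le_logb T 2

theorem cut_card_le (T : ℕ) (hT : 0 < T) (t : ℕ) (ht1 : 1 ≤ t) (htT : t ≤ T) :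
    ((cut T t).card : ℝ) ≤ Real.logb 2 T + 1 :=
  cut_card_le_general T t
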